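/- arXiv:1801.08516 — 2 statements merged into one kernel-verified Lean document; each statement's English description precedes it below -/
import Mathlib

section
/- For all real t, f(t)^2 / 2 ≤ f'(t) · f(t) · t ≤ f(t)^2. -/
/-!
On `t ≥ 0` put `F t = f t * √(1 + 2 f(t)²)`. Since `f' = 1 / √(1 + 2 f²)`, one computes
`F' = 1 + 2 f² / (1 + 2 f²) ∈ [1, 2]`, so `t ≤ F t ≤ 2 t` because `F 0 = 0`. As `f ≥ 0` there,
multiplying by `f t / √(1 + 2 f(t)²)` turns these into the two inequalities, because
`f' f t = f t / √(1 + 2 f²)` and `f² = f F / √(1 + 2 f²)`. For `t < 0` the quantities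
`f'(t) f(t) t` and `f(t)²` are unchanged under `t ↦ -t`, since `f` is odd and `f'` even.
-/

open Real Set

lemma Real.rpow_neg_one_half_eq_inv_sqrt {x : ℝ} (hx : 0 ≤ x) : x ^ (-(1 / 2) : ℝ) = (√x)⁻¹ := by
  rw [rpow_neg hx, ← sqrt_eq_rpow]

lemma Function.Odd.deriv_neg {f : ℝ → ℝ} (hf : Function.Odd f) (x : ℝ) :
    deriv f (-x) = deriv f x := by
  have hf_eq : f = fun y => -f (-y) := funext fun y => by rw [hf, neg_neg]
  conv_rhs => rw [hf_eq]
  rw [deriv.fun_neg, deriv_comp_neg, neg_neg]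

section DerivBounds

variable {g g' : ℝ → ℝ} {a C x : ℝ}

lemma mul_sub_le_sub_of_le_hasDerivAt_Ici (hg : ∀ y, a ≤ y → HasDerivAt g (g' y) y)
    (hC : ∀ y, a ≤ y → C ≤ g' y) (hx : a ≤ x) : C * (x - a) ≤ g x - g a := by
  refine (convex_Ici a).mul_sub_le_image_sub_of_le_deriv
    (fun y hy => (hg y hy).continuousAt.continuousWithinAt) (fun y hy => ?_) (fun y hy => ?_)
    a self_mem_Ici x hx hx <;> rw [interior_Ici] at hy
  · exact (hg y hy.le).differentiableAt.differentiableWithinAt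
  · rw [(hg y hy.le).deriv]
    exact hC y hy.le

lemma sub_le_mul_sub_of_hasDerivAt_le_Ici (hg : ∀ y, a ≤ y → HasDerivAt g (g' y) y)
    (hC : ∀ y, a ≤ y → g' y ≤ C) (hx : a ≤ x) : g x - g a ≤ C * (x - a) := by
  have := mul_sub_le_sub_of_le_hasDerivAt_Ici (fun y hy => (hg y hy).neg)
    (fun y hy => neg_le_neg (hC y hy)) hx
  simp only [Pi.neg_apply] at this
  linarith

end DerivBounds

def IsForwardSolution (f : ℝ → ℝ) : Prop :=
  ∀ t, 0 ≤ t → HasDerivAt f (√(1 + 2 * f t ^ 2))⁻¹ t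

namespace IsForwardSolution

variable {f : ℝ → ℝ} {t : ℝ}

lemma nonneg (hf : IsForwardSolution f) (hf0 : f 0 = 0) (ht : 0 ≤ t) : 0 ≤ f t := by
  have := mul_sub_le_sub_of_le_hasDerivAt_Ici hf (fun y _ => by positivity) ht
  simpa [hf0] using this

lemma hasDerivAt_mul_sqrt (hf : IsForwardSolution f) (ht : 0 ≤ t) :
    HasDerivAt (fun s => f s * √(1 + 2 * f s ^ 2)) (1 + 2 * f t ^ 2 / (1 + 2 * f t ^ 2)) t := by
  have hpos : 0 < 1 + 2 * f t ^ 2 := by positivity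
  have hsq : HasDerivAt (fun s => 1 + 2 * f s ^ 2) (4 * f t * (√(1 + 2 * f t ^ 2))⁻¹) t :=
    ((((hf t ht).fun_pow 2).const_mul 2).const_add 1).congr_deriv (by norm_num; ring)
  have hsqrt := hsq.sqrt hpos.ne'
  refine ((hf t ht).mul hsqrt).congr_deriv ?_
  have hs : √(1 + 2 * f t ^ 2) ^ 2 = 1 + 2 * f t ^ 2 := sq_sqrt hpos.le
  have hs0 : √(1 + 2 * f t ^ 2) ≠ 0 := (sqrt_pos.mpr hpos).ne'
  field_simp
  rw [hs]
  ring

lemma le_mul_sqrt (hf : IsForwardSolution f) (hf0 : f 0 = 0) (ht : 0 ≤ t) :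
    t ≤ f t * √(1 + 2 * f t ^ 2) := by
  have := mul_sub_le_sub_of_le_hasDerivAt_Ici (C := 1) (fun _ => hf.hasDerivAt_mul_sqrt)
    (fun y _ => le_add_of_nonneg_right (by positivity)) ht
  simpa [hf0] using this

lemma mul_sqrt_le (hf : IsForwardSolution f) (hf0 : f 0 = 0) (ht : 0 ≤ t) :
    f t * √(1 + 2 * f t ^ 2) ≤ 2 * t := by
  have := sub_le_mul_sub_of_hasDerivAt_le_Ici (C := 2) (fun _ => hf.hasDerivAt_mul_sqrt)
    (fun y _ => ?_) ht
  · simpa [hf0] using this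
  have hpos : 0 < 1 + 2 * f y ^ 2 := by positivity
  linarith [(div_le_one hpos).mpr (le_add_of_nonneg_left zero_le_one)]

lemma sq_div_two_le_and_le_sq (hf : IsForwardSolution f) (hf0 : f 0 = 0) (ht : 0 ≤ t) :
    f t ^ 2 / 2 ≤ (√(1 + 2 * f t ^ 2))⁻¹ * f t * t ∧
      (√(1 + 2 * f t ^ 2))⁻¹ * f t * t ≤ f t ^ 2 := by
  have hs : 0 < √(1 + 2 * f t ^ 2) := sqrt_pos.mpr (by positivity)
  have hft := hf.nonneg hf0 ht
  have hlow := mul_le_mul_of_nonneg_left (hf.le_mul_sqrt hf0 ht) hft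
  have hupp := mul_le_mul_of_nonneg_left (hf.mul_sqrt_le hf0 ht) hft
  rw [inv_mul_eq_div, div_mul_eq_mul_div, le_div_iff₀ hs, div_le_iff₀ hs]
  constructor <;> nlinarith

end IsForwardSolution

theorem stmt_7 (f : ℝ → ℝ) (hf0 : f 0 = 0) (hodd : ∀ t : ℝ, f (-t) = -f t)
    (hf1 : ∀ t : ℝ, 0 ≤ t → HasDerivAt f ((1 + 2 * f t ^ 2) ^ (-(1/2) : ℝ)) t) :
    ∀ t : ℝ, f t ^ 2 / 2 ≤ deriv f t * f t * t ∧ deriv f t * f t * t ≤ f t ^ 2 := by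
  have hf : IsForwardSolution f := fun t ht => by
    simpa only [rpow_neg_one_half_eq_inv_sqrt (by positivity : (0 : ℝ) ≤ 1 + 2 * f t ^ 2)]
      using hf1 t ht
  intro t
  wlog ht : 0 ≤ t generalizing t
  · have key := this (-t) (by linarith)
    simpa only [Function.Odd.deriv_neg hodd, hodd, neg_sq, mul_neg, neg_mul, neg_neg] using key
  rw [(hf t ht).deriv]
  exact hf.sq_div_two_le_and_le_sq hf0 ht
end

section
/- The function t ↦ f(t)^3 · f'(t)/t is strictly increasing on (0, ∞). -/
/-!
Put `g = f ^ 3 * f'`, so that `g 0 = 0` and the claim is that `g t / t`, the slope of the chord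
of `g` from the origin, increases. This holds as soon as `g` is strictly convex on `[0, ∞)`.
Along the ODE, `g'(t) = H (f t)` with `H u = u² (3 + 4u²) / (1 + 2u²)²`, which is strictly
increasing for `u ≥ 0`; since `f` is increasing and nonnegative there, so is `g'`.
-/

open Set

noncomputable def velocity (u : ℝ) : ℝ := (1 + 2 * u ^ 2) ^ (-(1/2) : ℝ)

noncomputable def cubeVelocityDeriv (u : ℝ) : ℝ := u ^ 2 * (3 + 4 * u ^ 2) / (1 + 2 * u ^ 2) ^ 2

lemma velocity_pos (u : ℝ) : 0 < velocity u := Real.rpow_pos_of_pos (by positivity) _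

lemma velocity_sq (u : ℝ) : velocity u ^ 2 = (1 + 2 * u ^ 2)⁻¹ := by
  rw [velocity, ← Real.rpow_natCast, ← Real.rpow_mul (by positivity)]
  norm_num [Real.rpow_neg_one]

lemma hasDerivAt_velocity (u : ℝ) : HasDerivAt velocity (-2 * u * velocity u ^ 3) u := by
  have hA : HasDerivAt (fun x : ℝ => 1 + 2 * x ^ 2) (2 * (2 * u)) u := by
    simpa using ((hasDerivAt_pow 2 u).const_mul 2).const_add 1
  refine (hA.rpow_const (p := -(1/2)) (Or.inl (by positivity))).congr_deriv ?_
  rw [velocity, ← Real.rpow_natCast _ 3, ← Real.rpow_mul (by positivity)]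
  norm_num
  exact Or.inl (by ring)

lemma strictMonoOn_cubeVelocityDeriv : StrictMonoOn cubeVelocityDeriv (Ici 0) := by
  intro a ha b _ hab
  have hsq : a ^ 2 < b ^ 2 := pow_lt_pow_left₀ hab ha two_ne_zero
  rw [cubeVelocityDeriv, cubeVelocityDeriv, div_lt_div_iff₀ (by positivity) (by positivity)]
  -- the difference of the cross products factors as `(b² - a²) (3 + 4(a² + b²) + 4a²b²)`
  have hpos : 0 < 3 + 4 * (a ^ 2 + b ^ 2) + 4 * a ^ 2 * b ^ 2 := by positivity
  nlinarith [mul_pos (sub_pos.2 hsq) hpos]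

lemma StrictConvexOn.strictMonoOn_div_self {g : ℝ → ℝ} (hg : StrictConvexOn ℝ (Ici 0) g)
    (h0 : g 0 = 0) : StrictMonoOn (fun t => g t / t) (Ioi 0) := by
  intro x hx y hy hxy
  simpa [h0] using hg.secant_strict_mono (a := 0) self_mem_Ici (Ioi_subset_Ici_self hx)
    (Ioi_subset_Ici_self hy) hx.ne' hy.ne' hxy

section Solution

variable {f : ℝ → ℝ} (hf : ∀ t, 0 ≤ t → HasDerivAt f (velocity (f t)) t)
include hf

lemma strictMonoOn_of_hasDerivAt_velocity : StrictMonoOn f (Ici 0) :=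
  strictMonoOn_of_deriv_pos (convex_Ici 0)
    (fun t ht => (hf t ht).continuousAt.continuousWithinAt)
    (fun t ht => by
      rw [interior_Ici] at ht
      rw [(hf t (le_of_lt ht)).deriv]
      exact velocity_pos _)

lemma hasDerivAt_cube_mul_velocity {t : ℝ} (ht : 0 ≤ t) :
    HasDerivAt (fun x => f x ^ 3 * velocity (f x)) (cubeVelocityDeriv (f t)) t := by
  have hd := ((hf t ht).pow 3).mul ((hasDerivAt_velocity (f t)).comp t (hf t ht))
  refine hd.congr_deriv ?_
  calc _ = 3 * f t ^ 2 * velocity (f t) ^ 2 - 2 * f t ^ 4 * (velocity (f t) ^ 2) ^ 2 := by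
        simp only [Function.comp_apply, Pi.pow_apply]; push_cast; ring
    _ = _ := by rw [velocity_sq, cubeVelocityDeriv]; field_simp; ring

lemma strictConvexOn_cube_mul_velocity (hf0 : f 0 = 0) :
    StrictConvexOn ℝ (Ici 0) (fun x => f x ^ 3 * velocity (f x)) := by
  have hmono := strictMonoOn_of_hasDerivAt_velocity hf
  have hderiv : EqOn (cubeVelocityDeriv ∘ f) (deriv fun x => f x ^ 3 * velocity (f x)) (Ioi 0) :=
    fun t ht => ((hasDerivAt_cube_mul_velocity hf (le_of_lt ht)).deriv).symm
  refine StrictMonoOn.strictConvexOn_of_deriv (convex_Ici 0)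
    (fun t ht => (hasDerivAt_cube_mul_velocity hf ht).continuousAt.continuousWithinAt) ?_
  rw [interior_Ici]
  refine (strictMonoOn_cubeVelocityDeriv.comp (hmono.mono Ioi_subset_Ici_self) ?_).congr hderiv
  intro t ht
  exact hf0 ▸ hmono.monotoneOn self_mem_Ici (Ioi_subset_Ici_self ht) (le_of_lt ht)

end Solution

theorem stmt_10_general (f : ℝ → ℝ) (hf0 : f 0 = 0)
    (hf1 : ∀ t : ℝ, 0 ≤ t → HasDerivAt f ((1 + 2 * f t ^ 2) ^ (-(1/2) : ℝ)) t) :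
    StrictMonoOn (fun t : ℝ => f t ^ 3 * deriv f t / t) (Set.Ioi 0) := by
  have hconvex := strictConvexOn_cube_mul_velocity hf1 hf0
  refine (hconvex.strictMonoOn_div_self (by simp [hf0])).congr fun t ht => ?_
  simp only [(hf1 t (le_of_lt ht)).deriv, velocity]

theorem stmt_10 (f : ℝ → ℝ) (hf0 : f 0 = 0) (hodd : ∀ t : ℝ, f (-t) = -f t)
    (hf1 : ∀ t : ℝ, 0 ≤ t → HasDerivAt f ((1 + 2 * f t ^ 2) ^ (-(1/2) : ℝ)) t) :
    StrictMonoOn (fun t : ℝ => f t ^ 3 * deriv f t / t) (Set.Ioi 0) :=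
  stmt_10_general f hf0 hf1
end
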